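/- The four scalar moment polynomials of the D2Q13 lattice Boltzmann scheme, namely p₀(x,y) = 1, p₁(x,y) = −28 + 13(x² + y²), p₂(x,y) = 140 + (x² + y²)(−361/2 + (77/2)(x² + y²)), and p₃(x,y) = −12 + (x² + y²)(581/12 + (x² + y²)(−273/8 + (137/24)(x² + y²))), are pairwise orthogonal with respect to summation over the D2Q13 velocity set: for all i ≠ j in {0,1,2,3}, ∑_{v ∈ V} pᵢ(v) pⱼ(v) = 0. -/

import Mathlib

/-- The D2Q13 velocity set, a subset of `ℤ²` with 13 velocities. -/
def d2q13 : Finset (ℤ × ℤ) :=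
  {(0, 0), (1, 0), (0, 1), (-1, 0), (0, -1), (1, 1), (-1, 1), (-1, -1), (1, -1),
   (2, 0), (0, 2), (-2, 0), (0, -2)}

/-- The four scalar moment polynomials of the D2Q13 lattice Boltzmann scheme,
viewed as real functions of the two variables `x, y`. -/
noncomputable def scalarMoment : Fin 4 → ℝ → ℝ → ℝ :=
  ![fun _ _ => 1,
    fun x y => -28 + 13 * (x ^ 2 + y ^ 2),
    fun x y => 140 + (x ^ 2 + y ^ 2) * (-361 / 2 + (77 / 2) * (x ^ 2 + y ^ 2)),
    fun x y => -12 + (x ^ 2 + y ^ 2) *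
      (581 / 12 + (x ^ 2 + y ^ 2) * (-273 / 8 + (137 / 24) * (x ^ 2 + y ^ 2)))]

/-! The moments are polynomials in `r = x² + y²`, and `d2q13` consists of the origin and three
shells of four velocities each, at `r = 1, 2, 4`. So the lattice sum becomes the discrete
inner product `g ↦ g 0 + 4 (g 1 + g 2 + g 4)` on one-variable polynomials, in which the
profiles below are orthogonal. -/

noncomputable def radialScalarMoment : Fin 4 → ℝ → ℝ :=
  ![fun _ => 1,
    fun r => -28 + 13 * r,
    fun r => 140 + r * (-361 / 2 + (77 / 2) * r),
    fun r => -12 + r * (581 / 12 + r * (-273 / 8 + (137 / 24) * r))]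

lemma scalarMoment_eq_radialScalarMoment (i : Fin 4) (x y : ℝ) :
    scalarMoment i x y = radialScalarMoment i (x ^ 2 + y ^ 2) := by
  fin_cases i <;> rfl

lemma sum_d2q13_radial {M : Type*} [AddCommMonoid M] (g : ℝ → M) :
    ∑ v ∈ d2q13, g ((v.1 : ℝ) ^ 2 + (v.2 : ℝ) ^ 2) = g 0 + 4 • (g 1 + g 2 + g 4) := by
  rw [d2q13]
  norm_num
  abel

lemma radialScalarMoment_orthogonal {i j : Fin 4} (hij : i ≠ j) :
    let g := fun r => radialScalarMoment i r * radialScalarMoment j r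
    g 0 + 4 • (g 1 + g 2 + g 4) = 0 := by
  fin_cases i <;> fin_cases j <;>
    first
    | exact absurd rfl hij
    | norm_num [radialScalarMoment]

/-- The four scalar moment polynomials of the D2Q13 scheme are pairwise orthogonal
with respect to summation over the D2Q13 velocity set. -/
theorem d2q13_scalar_moments_orthogonal :
    ∀ i j : Fin 4, i ≠ j →
      ∑ v ∈ d2q13,
        scalarMoment i (v.1 : ℝ) (v.2 : ℝ) * scalarMoment j (v.1 : ℝ) (v.2 : ℝ) = 0 := by
  intro i j hij
  simp only [scalarMoment_eq_radialScalarMoment]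
  exact (sum_d2q13_radial fun r => radialScalarMoment i r * radialScalarMoment j r).trans
    (radialScalarMoment_orthogonal hij)
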